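/- arXiv:1702.02375 — 2 statements merged into one kernel-verified Lean document; each statement's English description precedes it below -/
import Mathlib

section
/- Let B be an infinite primitive set of positive integers. Then E = F_{B ∪ A_∞} = F_B ∩ F_{A_∞}; that is, an integer n lies in F_{A_S} for some finite S ⊆ B if and only if no element of B and no element of A_∞ divides n. -/
open Set MeasureTheory Filter Topology

namespace BFree

/-- The ambient compact group `∏_{b ∈ B} ℤ/bℤ`. -/
abbrev Gspace (B : Set ℕ+) : Type := ∀ b : B, ZMod ((b : ℕ+) : ℕ)

/-- The diagonal embedding `Δ : ℤ → ∏_{b ∈ B} ℤ/bℤ`. -/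
def delta (B : Set ℕ+) : ℤ →+ Gspace B where
  toFun n := fun b => (n : ZMod ((b : ℕ+) : ℕ))
  map_zero' := by funext b; simp
  map_add' m n := by funext b; simp

/-- `H`, the closure of `Δ(ℤ)`, as a (closed) subgroup of `Gspace B`. -/
def Hgrp (B : Set ℕ+) : AddSubgroup (Gspace B) :=
  (delta B).range.topologicalClosure

/-- `H` as a compact topological group. -/
abbrev Hspace (B : Set ℕ+) : Type := ↥(Hgrp B)

instance (B : Set ℕ+) : CompactSpace (Hspace B) :=
  isCompact_iff_compactSpace.mp
    (IsClosed.isCompact (AddSubgroup.isClosed_topologicalClosure _))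

instance (B : Set ℕ+) : BorelSpace (Hspace B) := Subtype.borelSpace _

/-- The window `W = {h ∈ H : h_b ≠ 0 for all b ∈ B}`. -/
def window (B : Set ℕ+) : Set (Hspace B) :=
  {h | ∀ b : B, (h : Gspace B) b ≠ 0}

/-- `Δ(n)` as an element of `H`. -/
def deltaH (B : Set ℕ+) (n : ℤ) : Hspace B :=
  ⟨delta B n, (delta B).range.le_topologicalClosure ⟨n, rfl⟩⟩

/-- The set of multiples `M_B ⊆ ℤ` of a set `B` of positive integers. -/
def MultSet (B : Set ℕ+) : Set ℤ := {n | ∃ b ∈ B, ((b : ℕ) : ℤ) ∣ n}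

/-- The `B`-free set `F_B = ℤ ∖ M_B`. -/
def FreeSet (B : Set ℕ+) : Set ℤ := {n | ∀ b ∈ B, ¬ ((b : ℕ) : ℤ) ∣ n}

/-- Set of multiples of a set of natural numbers. -/
def MultSetN (C : Set ℕ) : Set ℤ := {n | ∃ c ∈ C, (c : ℤ) ∣ n}

/-- Free set of a set of natural numbers. -/
def FreeSetN (C : Set ℕ) : Set ℤ := {n | ∀ c ∈ C, ¬ (c : ℤ) ∣ n}

/-- `#(M ∩ [1, N]) / N`. -/
noncomputable def densSeq (M : Set ℤ) (N : ℕ) : ℝ :=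
  (Nat.card ↥(M ∩ Set.Icc (1 : ℤ) (N : ℤ)) : ℝ) / N

/-- Lower (asymptotic) density of a set of integers. -/
noncomputable def lowerDensity (M : Set ℤ) : ℝ := Filter.liminf (densSeq M) Filter.atTop

/-- Upper (asymptotic) density of a set of integers. -/
noncomputable def upperDensity (M : Set ℤ) : ℝ := Filter.limsup (densSeq M) Filter.atTop

/-- `B` is taut if removing any element strictly decreases the lower density
of the set of multiples. -/
def Taut (B : Set ℕ+) : Prop :=
  ∀ b ∈ B, lowerDensity (MultSet (B \ {b})) < lowerDensity (MultSet B)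

/-- `B` is primitive if no element divides another. -/
def Primitive (B : Set ℕ+) : Prop :=
  ∀ b ∈ B, ∀ b' ∈ B, (b : ℕ) ∣ (b' : ℕ) → b = b'

/-- `lcm(S)` for a finite set of positive integers. -/
def lcmS (S : Finset ℕ+) : ℕ := S.lcm fun b => (b : ℕ)

/-- `A_S = {gcd(b, lcm S) : b ∈ B}`. -/
def ASet (B : Set ℕ+) (S : Finset ℕ+) : Set ℕ :=
  {m | ∃ b ∈ B, m = Nat.gcd (b : ℕ) (lcmS S)}

/-- The cylinder set `U_S(h) ⊆ H`. -/
def cyl (B : Set ℕ+) (S : Finset ℕ+) (hS : ↑S ⊆ B) (h : Hspace B) : Set (Hspace B) :=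
  {h' | ∀ b, ∀ hb : b ∈ S, (h' : Gspace B) ⟨b, hS hb⟩ = (h : Gspace B) ⟨b, hS hb⟩}

/-- `E = ⋃_{S ⊆ B finite} F_{A_S}`. -/
def Eset (B : Set ℕ+) : Set ℤ :=
  ⋃ (S : Finset ℕ+) (_ : ↑S ⊆ B), FreeSetN (ASet B S)

/-- `A_∞`. -/
def Ainfty (B : Set ℕ+) : Set ℕ :=
  {n | ∀ S : Finset ℕ+, ↑S ⊆ B →
    ∃ S' : Finset ℕ+, S ⊆ S' ∧ ↑S' ⊆ B ∧ n ∈ ASet B S' ∧ ∀ b ∈ S', (b : ℕ) ≠ n}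

/-- The indicator `η` of the `B`-free set, as a point of `{0,1}^ℤ`. -/
noncomputable def eta (B : Set ℕ+) : ℤ → Bool :=
  fun n => @decide (n ∈ FreeSet B) (Classical.propDecidable _)

/-- The left shift on `{0,1}^ℤ`, iterated `k` times (`k ∈ ℤ`). -/
def shift (k : ℤ) (x : ℤ → Bool) : ℤ → Bool := fun n => x (n + k)

/-- The orbit closure `X_η` of `η` in `{0,1}^ℤ`. -/
noncomputable def Xeta (B : Set ℕ+) : Set (ℤ → Bool) :=
  closure {x | ∃ k : ℤ, x = shift k (eta B)}


/-!
Since `gcd(b, lcm S) ∣ b`, no element of `E` is divisible by an element of `B`. If `S ⊆ S'`, then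
`gcd(b, lcm S) ∣ gcd(b, lcm S')`, so every element of `A_∞`, being an element of some `A_{S'}`
with `S' ⊇ S`, is a multiple of an element of `A_S`; hence `E ⊆ F_{A_∞}` as well.
Conversely, if `n ∉ E` then every `A_S` contains a divisor of `n`. For `n ≠ 0` there are only
finitely many divisors, so a single divisor `d` of `n` lies in `A_{S'}` for cofinally many `S'`;
such a `d` is either an element of `B` or an element of `A_∞`. For `n = 0`, `0 ∈ F_B` forces
`B = ∅`, and then `E = ℤ`.
-/

lemma exists_cofinal_of_forall_exists_mem {α ι : Type*} (D : Finset ι) (C : Set α)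
    (P : ι → Finset α → Prop) (h : ∀ S : Finset α, ↑S ⊆ C → ∃ d ∈ D, P d S) :
    ∃ d ∈ D, ∀ S : Finset α, ↑S ⊆ C → ∃ S', S ⊆ S' ∧ ↑S' ⊆ C ∧ P d S' := by
  classical
  by_contra! hD
  choose T hTC hT using hD
  let U : Finset α := D.attach.biUnion fun d => T d.1 d.2
  have hUC : ↑U ⊆ C := by
    intro a ha
    obtain ⟨d, -, hd⟩ := Finset.mem_biUnion.mp ha
    exact hTC d.1 d.2 hd
  obtain ⟨d, hd, hdU⟩ := h U hUC
  exact hT d hd U (fun a ha => Finset.mem_biUnion.mpr ⟨⟨d, hd⟩, Finset.mem_attach _ _, ha⟩)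
    hUC hdU

lemma lcmS_dvd_lcmS {S S' : Finset ℕ+} (h : S ⊆ S') : lcmS S ∣ lcmS S' :=
  Finset.lcm_dvd fun _ hb => Finset.dvd_lcm (h hb)

lemma mem_Eset_iff {B : Set ℕ+} {n : ℤ} :
    n ∈ Eset B ↔ ∃ S : Finset ℕ+, ↑S ⊆ B ∧ ∀ d ∈ ASet B S, ¬ (d : ℤ) ∣ n := by
  simp only [Eset, FreeSetN, Set.mem_iUnion, Set.mem_ofPred_eq, exists_prop]

lemma Eset_subset_FreeSet (B : Set ℕ+) : Eset B ⊆ FreeSet B := by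
  intro n hn b hb hbn
  obtain ⟨S, -, hS⟩ := mem_Eset_iff.mp hn
  exact hS _ ⟨b, hb, rfl⟩ ((Int.natCast_dvd_natCast.mpr (Nat.gcd_dvd_left _ _)).trans hbn)

lemma Eset_subset_FreeSetN_Ainfty (B : Set ℕ+) : Eset B ⊆ FreeSetN (Ainfty B) := by
  intro n hn a ha han
  obtain ⟨S, hSB, hS⟩ := mem_Eset_iff.mp hn
  obtain ⟨S', hSS', -, ⟨b, hb, rfl⟩, -⟩ := ha S hSB
  have hdvd : Nat.gcd (b : ℕ) (lcmS S) ∣ Nat.gcd (b : ℕ) (lcmS S') :=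
    Nat.gcd_dvd_gcd_of_dvd_right _ (lcmS_dvd_lcmS hSS')
  exact hS _ ⟨b, hb, rfl⟩ ((Int.natCast_dvd_natCast.mpr hdvd).trans han)

lemma FreeSet_inter_FreeSetN_Ainfty_subset_Eset (B : Set ℕ+) :
    FreeSet B ∩ FreeSetN (Ainfty B) ⊆ Eset B := by
  rintro n ⟨hnB, hnA⟩
  by_contra hnE
  have hdiv : ∀ S : Finset ℕ+, ↑S ⊆ B → ∃ d ∈ ASet B S, (d : ℤ) ∣ n := by
    simpa [mem_Eset_iff] using hnE
  have hn : n ≠ 0 := by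
    rintro rfl
    obtain ⟨_, ⟨b, hb, -⟩, -⟩ := hdiv ∅ (by simp)
    exact hnB b hb (dvd_zero _)
  have hdiv' : ∀ S : Finset ℕ+, ↑S ⊆ B → ∃ d ∈ n.natAbs.divisors, d ∈ ASet B S := by
    intro S hS
    obtain ⟨d, hd, hdn⟩ := hdiv S hS
    exact ⟨d, Nat.mem_divisors.mpr ⟨Int.natCast_dvd.mp hdn, Int.natAbs_ne_zero.mpr hn⟩, hd⟩
  obtain ⟨d, hdn, hd⟩ := exists_cofinal_of_forall_exists_mem _ B _ hdiv'
  have hdn : (d : ℤ) ∣ n := Int.natCast_dvd.mpr (Nat.dvd_of_mem_divisors hdn)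
  by_cases hdB : ∃ b ∈ B, (b : ℕ) = d
  · obtain ⟨b, hb, rfl⟩ := hdB
    exact hnB b hb hdn
  · push Not at hdB
    refine hnA d (fun S hS => ?_) hdn
    obtain ⟨S', hSS', hS'B, hdS'⟩ := hd S hS
    exact ⟨S', hSS', hS'B, hdS', fun b hb => hdB b (hS'B hb)⟩

lemma FreeSetN_union (C D : Set ℕ) : FreeSetN (C ∪ D) = FreeSetN C ∩ FreeSetN D := by
  ext n
  simp only [FreeSetN, Set.mem_union, or_imp, forall_and, Set.mem_inter_iff, Set.mem_ofPred_eq]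

lemma FreeSetN_image_coe (B : Set ℕ+) : FreeSetN ((fun b : ℕ+ => (b : ℕ)) '' B) = FreeSet B := by
  ext n
  simp [FreeSetN, FreeSet]

theorem statement18_general (B : Set ℕ+) :
    Eset B = FreeSetN ((fun b : ℕ+ => (b : ℕ)) '' B ∪ Ainfty B) ∧
    Eset B = FreeSet B ∩ FreeSetN (Ainfty B) := by
  have hE : Eset B = FreeSet B ∩ FreeSetN (Ainfty B) :=
    (Set.subset_inter (Eset_subset_FreeSet B) (Eset_subset_FreeSetN_Ainfty B)).antisymm
      (FreeSet_inter_FreeSetN_Ainfty_subset_Eset B)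
  exact ⟨by rw [FreeSetN_union, FreeSetN_image_coe, hE], hE⟩

/-- For an infinite primitive `B`: `E = F_{B ∪ A_∞} = F_B ∩ F_{A_∞}`. -/
theorem statement18 (B : Set ℕ+) (hB : B.Infinite) (hprim : Primitive B) :
    Eset B = FreeSetN ((fun b : ℕ+ => (b : ℕ)) '' B ∪ Ainfty B) ∧
    Eset B = FreeSet B ∩ FreeSetN (Ainfty B) :=
  statement18_general B

end BFree
end

section
/- Let B be an infinite set of positive integers and let S_1 ⊆ S_2 ⊆ … be a filtration of B by finite sets with ⋃_k S_k = B. For each k let c_k be the least positive integer c such that c + M_{A_{S_k}} = M_{A_{S_k}}. Then the period group H_{int(W)} = {h ∈ H : int(W) + h = int(W)} is trivial (equals {0}) if and only if for every b ∈ B there exists n ≥ 1 such that b divides c_n. -/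
open Set MeasureTheory Filter Topology

namespace BFree

/-!
On every finite `S ⊆ B` a point `x ∈ H` agrees with some `Δ t`, and `t` is unique modulo
`lcm S`. Along the filtration, `int(W)` is the union of the sets of points whose lift on `S k`
avoids `M_{A_{S k}}`: a lift landing in `M_{A_{S k}}` through `gcd(b, lcm S k)` can be corrected,
by the Chinese remainder theorem, to some `Δ m` close to `x` with `b ∣ m`. The same device shows
that `h` is a period of `int(W)` exactly when every lift of `h` on every `S k` is a period of
`M_{A_{S k}}`, i.e. a multiple of `c k`.

If every `b` divides some `c n`, the lifts of such an `h` are eventually divisible by `b`, so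
`h = 0`. Conversely, a cluster point of `Δ(c m)` in the compact group `H` is a period of `int(W)`,
since `c m` is a period of `M_{A_{S k}}` for `m ≥ k`; when the period group is trivial it is `0`,
and then each `b` divides some `c m`.
-/

open scoped Pointwise

section AgreeOn

variable {ι : Type*} {π : ι → Type*}

def AgreeOn (s : Set ι) (f g : ∀ i, π i) : Prop := ∀ i ∈ s, f i = g i

lemma AgreeOn.symm {s : Set ι} {f g : ∀ i, π i} (h : AgreeOn s f g) : AgreeOn s g f :=
  fun i hi => (h i hi).symm

lemma AgreeOn.trans {s : Set ι} {f g k : ∀ i, π i} (h₁ : AgreeOn s f g) (h₂ : AgreeOn s g k) :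
    AgreeOn s f k :=
  fun i hi => (h₁ i hi).trans (h₂ i hi)

lemma AgreeOn.mono {s t : Set ι} {f g : ∀ i, π i} (h : AgreeOn t f g) (hst : s ⊆ t) :
    AgreeOn s f g :=
  fun i hi => h i (hst hi)

variable [∀ i, TopologicalSpace (π i)]

lemma exists_finset_setOf_agreeOn_subset {x : ∀ i, π i} {U : Set (∀ i, π i)} (hU : U ∈ 𝓝 x) :
    ∃ I : Finset ι, {g | AgreeOn I g x} ⊆ U := by
  rw [nhds_pi, Filter.mem_pi'] at hU
  obtain ⟨I, t, ht, hIt⟩ := hU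
  exact ⟨I, fun g hg => hIt fun i hi => hg i hi ▸ mem_of_mem_nhds (ht i)⟩

lemma isOpen_setOf_agreeOn [∀ i, DiscreteTopology (π i)] {s : Set ι} (hs : s.Finite)
    (x : ∀ i, π i) : IsOpen {g : ∀ i, π i | AgreeOn s g x} :=
  isOpen_set_pi (s := fun i => {x i}) hs fun _ _ => isOpen_discrete _

end AgreeOn

lemma Int.exists_dvd_sub_and_dvd_sub {p q a b : ℤ} (h : (Int.gcd p q : ℤ) ∣ a - b) :
    ∃ m : ℤ, p ∣ m - a ∧ q ∣ m - b := by
  obtain ⟨s, hs⟩ := h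
  refine ⟨a - s * Int.gcdA p q * p, ⟨-(s * Int.gcdA p q), by ring⟩, ⟨s * Int.gcdB p q, ?_⟩⟩
  linear_combination hs + s * Int.gcd_eq_gcd_ab p q

lemma Int.mem_stabilizer_set_iff {M : Set ℤ} {t : ℤ} :
    t ∈ AddAction.stabilizer ℤ M ↔ ∀ n, n + t ∈ M ↔ n ∈ M := by
  simp only [AddAction.mem_stabilizer_set, vadd_eq_add, add_comm t]

lemma setOf_image_add_right_eq_stabilizer {G : Type*} [AddCommGroup G] (A : Set G) :
    {h : G | (fun w => w + h) '' A = A} = AddAction.stabilizer G A := by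
  ext h
  simp only [Set.mem_ofPred_eq, SetLike.mem_coe, AddAction.mem_stabilizer_iff, ← Set.image_vadd,
    vadd_eq_add, add_comm h]

variable {B : Set ℕ+}

def coords (B : Set ℕ+) (S : Finset ℕ+) : Set B := {b | (b : ℕ+) ∈ S}

lemma finite_coords (S : Finset ℕ+) : (coords B S).Finite :=
  S.finite_toSet.preimage Subtype.val_injective.injOn

lemma coords_mono {S T : Finset ℕ+} (h : S ⊆ T) : coords B S ⊆ coords B T :=
  fun _ hb => h hb

lemma delta_apply (t : ℤ) (b : B) : delta B t b = (t : ZMod (b : ℕ)) := rfl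

lemma AgreeOn.add_delta {s : Set B} {x y : Gspace B} {t u : ℤ} (hx : AgreeOn s x (delta B t))
    (hy : AgreeOn s y (delta B u)) : AgreeOn s (x + y) (delta B (t + u)) := by
  intro b hb
  rw [map_add, Pi.add_apply, Pi.add_apply, hx b hb, hy b hb]

lemma AgreeOn.neg_delta {s : Set B} {x : Gspace B} {t : ℤ} (hx : AgreeOn s x (delta B t)) :
    AgreeOn s (-x) (delta B (-t)) := by
  intro b hb
  rw [map_neg, Pi.neg_apply, Pi.neg_apply, hx b hb]

lemma exists_agreeOn_delta (x : Hspace B) {s : Set B} (hs : s.Finite) :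
    ∃ t : ℤ, AgreeOn s (x : Gspace B) (delta B t) := by
  have hx : (x : Gspace B) ∈ closure (Set.range (delta B)) := x.2
  obtain ⟨_, hg, t, rfl⟩ :=
    mem_closure_iff.1 hx _ (isOpen_setOf_agreeOn hs (x : Gspace B)) fun _ _ => rfl
  exact ⟨t, hg.symm⟩

lemma agreeOn_delta_iff {S : Finset ℕ+} (hS : ↑S ⊆ B) {t t' : ℤ} :
    AgreeOn (coords B S) (delta B t) (delta B t') ↔ ((lcmS S : ℕ) : ℤ) ∣ t' - t := by
  constructor
  · intro h
    refine Int.natCast_dvd.2 (Finset.lcm_dvd fun b hb => Int.natCast_dvd.1 ?_)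
    exact (ZMod.intCast_eq_intCast_iff_dvd_sub _ _ _).1 (h ⟨b, hS hb⟩ hb)
  · intro h b hb
    exact (ZMod.intCast_eq_intCast_iff_dvd_sub _ _ _).2
      ((Int.natCast_dvd_natCast.2 (Finset.dvd_lcm hb)).trans h)

lemma mem_multSetN_ASet {S : Finset ℕ+} {n : ℤ} :
    n ∈ MultSetN (ASet B S) ↔ ∃ b ∈ B, ((Nat.gcd (b : ℕ) (lcmS S) : ℕ) : ℤ) ∣ n := by
  constructor
  · rintro ⟨_, ⟨b, hb, rfl⟩, hdvd⟩
    exact ⟨b, hb, hdvd⟩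
  · rintro ⟨b, hb, hdvd⟩
    exact ⟨_, ⟨b, hb, rfl⟩, hdvd⟩

lemma Int.mem_iff_of_sub_mem_stabilizer {M : Set ℤ} {n n' : ℤ}
    (h : n - n' ∈ AddAction.stabilizer ℤ M) : n ∈ M ↔ n' ∈ M := by
  simpa using Int.mem_stabilizer_set_iff.1 h n'

lemma zmultiples_lcmS_le_stabilizer (S : Finset ℕ+) :
    AddSubgroup.zmultiples ((lcmS S : ℕ) : ℤ) ≤ AddAction.stabilizer ℤ (MultSetN (ASet B S)) := by
  refine AddSubgroup.zmultiples_le_of_mem (Int.mem_stabilizer_set_iff.2 fun n => ?_)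
  simp only [mem_multSetN_ASet]
  refine exists_congr fun b => and_congr_right fun _ => dvd_add_left ?_
  exact Int.natCast_dvd_natCast.2 (Nat.gcd_dvd_right _ _)

lemma mem_multSetN_ASet_iff_exists {S T : Finset ℕ+} (hST : lcmS S ∣ lcmS T) {n : ℤ} :
    n ∈ MultSetN (ASet B S) ↔
      ∃ n' ∈ MultSetN (ASet B T), ((lcmS S : ℕ) : ℤ) ∣ n - n' := by
  constructor
  · intro hn
    obtain ⟨b, hb, hdvd⟩ := mem_multSetN_ASet.1 hn
    have hgcd : Nat.gcd (lcmS S) (Nat.gcd (b : ℕ) (lcmS T)) = Nat.gcd (b : ℕ) (lcmS S) := by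
      rw [← Nat.gcd_assoc, Nat.gcd_comm (lcmS S)]
      exact Nat.gcd_eq_left ((Nat.gcd_dvd_right _ _).trans hST)
    obtain ⟨m, hmn, hm⟩ := Int.exists_dvd_sub_and_dvd_sub (p := (lcmS S : ℤ))
      (q := (Nat.gcd (b : ℕ) (lcmS T) : ℤ)) (a := n) (b := 0)
      (by rw [Int.gcd_natCast_natCast, hgcd, sub_zero]; exact hdvd)
    exact ⟨m, mem_multSetN_ASet.2 ⟨b, hb, by simpa using hm⟩, dvd_sub_comm.1 hmn⟩
  · rintro ⟨n', hn', hdvd⟩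
    obtain ⟨b, hb, hbn'⟩ := mem_multSetN_ASet.1 hn'
    refine mem_multSetN_ASet.2 ⟨b, hb, ?_⟩
    have h₁ : ((Nat.gcd (b : ℕ) (lcmS S) : ℕ) : ℤ) ∣ n' := (Int.natCast_dvd_natCast.2
      (Nat.gcd_dvd_gcd_of_dvd_right _ hST)).trans hbn'
    have h₂ : ((Nat.gcd (b : ℕ) (lcmS S) : ℕ) : ℤ) ∣ n - n' :=
      (Int.natCast_dvd_natCast.2 (Nat.gcd_dvd_right _ _)).trans hdvd
    simpa using dvd_add h₂ h₁

lemma stabilizer_multSetN_ASet_anti {S T : Finset ℕ+} (hST : lcmS S ∣ lcmS T) :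
    AddAction.stabilizer ℤ (MultSetN (ASet B T)) ≤
      AddAction.stabilizer ℤ (MultSetN (ASet B S)) := by
  intro t ht
  refine Int.mem_stabilizer_set_iff.2 fun n => ?_
  simp only [mem_multSetN_ASet_iff_exists hST]
  constructor
  · rintro ⟨n', hn', hdvd⟩
    exact ⟨n' - t, (Int.mem_stabilizer_set_iff.1 ht _).1 (by simpa using hn'),
      by simpa [sub_sub_eq_add_sub, add_sub_right_comm] using hdvd⟩
  · rintro ⟨n', hn', hdvd⟩
    exact ⟨n' + t, (Int.mem_stabilizer_set_iff.1 ht _).2 hn', by simpa using hdvd⟩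

def freeCylinders (B : Set ℕ+) (S : Finset ℕ+) : Set (Hspace B) :=
  {x | ∃ t ∉ MultSetN (ASet B S), AgreeOn (coords B S) (x : Gspace B) (delta B t)}

lemma isOpen_freeCylinders (S : Finset ℕ+) : IsOpen (freeCylinders B S) := by
  refine isOpen_iff_mem_nhds.2 fun x ⟨t, ht, hx⟩ => ?_
  have hU : {y : Hspace B | AgreeOn (coords B S) (y : Gspace B) x} ∈ 𝓝 x :=
    ((isOpen_setOf_agreeOn (finite_coords S) (x : Gspace B)).preimage
      continuous_subtype_val).mem_nhds fun _ _ => rfl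
  exact mem_of_superset hU fun y hy => ⟨t, ht, AgreeOn.trans hy hx⟩

lemma freeCylinders_subset_window {S : Finset ℕ+} (hS : ↑S ⊆ B) :
    freeCylinders B S ⊆ window B := by
  rintro x ⟨t, ht, hx⟩ b hxb
  obtain ⟨t', hxt'⟩ := exists_agreeOn_delta x (finite_coords (insert (b : ℕ+) S))
  have htt' : ((lcmS S : ℕ) : ℤ) ∣ t' - t :=
    (agreeOn_delta_iff hS).1 (hx.symm.trans (hxt'.mono (coords_mono (Finset.subset_insert _ _))))
  have hbt' : (((b : ℕ+) : ℕ) : ℤ) ∣ t' := by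
    rw [← ZMod.intCast_zmod_eq_zero_iff_dvd, ← hxb]
    exact (hxt' b (Finset.mem_insert_self _ _)).symm
  refine ht (mem_multSetN_ASet.2 ⟨b, b.2, ?_⟩)
  have h₁ := (Int.natCast_dvd_natCast.2 (Nat.gcd_dvd_left (b : ℕ) (lcmS S))).trans hbt'
  have h₂ := (Int.natCast_dvd_natCast.2 (Nat.gcd_dvd_right (b : ℕ) (lcmS S))).trans htt'
  simpa using dvd_sub h₁ h₂

lemma freeCylinders_subset_interior_window {S : Finset ℕ+} (hS : ↑S ⊆ B) :
    freeCylinders B S ⊆ interior (window B) :=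
  interior_maximal (freeCylinders_subset_window hS) (isOpen_freeCylinders S)

lemma add_mem_freeCylinders {S : Finset ℕ+} {h x : Hspace B} {t : ℤ}
    (hh : AgreeOn (coords B S) (h : Gspace B) (delta B t))
    (ht : t ∈ AddAction.stabilizer ℤ (MultSetN (ASet B S))) (hx : x ∈ freeCylinders B S) :
    h + x ∈ freeCylinders B S := by
  obtain ⟨s, hs, hxs⟩ := hx
  refine ⟨t + s, fun hts => hs ?_, hh.add_delta hxs⟩
  rwa [add_comm, Int.mem_stabilizer_set_iff.1 ht] at hts

lemma mem_stabilizer_freeCylinders {S : Finset ℕ+} {h : Hspace B} {t : ℤ}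
    (hh : AgreeOn (coords B S) (h : Gspace B) (delta B t))
    (ht : t ∈ AddAction.stabilizer ℤ (MultSetN (ASet B S))) :
    h ∈ AddAction.stabilizer (Hspace B) (freeCylinders B S) := by
  refine AddAction.mem_stabilizer_set.2 fun x => ⟨fun hx => ?_, add_mem_freeCylinders hh ht⟩
  simpa using add_mem_freeCylinders (h := -h) hh.neg_delta (neg_mem ht) hx

lemma eventually_mem_of_monotone {S : ℕ → Finset ℕ+} (hS : Monotone S)
    (hcover : ∀ b ∈ B, ∃ k, b ∈ S k) {b : ℕ+} (hb : b ∈ B) : ∀ᶠ k in atTop, b ∈ S k := by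
  obtain ⟨k, hk⟩ := hcover b hb
  exact eventually_atTop.2 ⟨k, fun j hj => hS hj hk⟩

lemma interior_window_eq_iUnion {S : ℕ → Finset ℕ+} (hS : Monotone S)
    (hsub : ∀ k, ↑(S k) ⊆ B) (hcover : ∀ b ∈ B, ∃ k, b ∈ S k) :
    interior (window B) = ⋃ k, freeCylinders B (S k) := by
  refine subset_antisymm (fun x hx => ?_)
    (iUnion_subset fun k => freeCylinders_subset_interior_window (hsub k))
  obtain ⟨U, hU, hUW⟩ := (mem_nhds_subtype _ _ _).1 (mem_interior_iff_mem_nhds.1 hx)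
  obtain ⟨I, hIU⟩ := exists_finset_setOf_agreeOn_subset hU
  obtain ⟨k, hk⟩ := ((eventually_all_finset I).2 fun i _ =>
    eventually_mem_of_monotone hS hcover i.2).exists
  obtain ⟨t, hxt⟩ := exists_agreeOn_delta x (finite_coords (S k))
  refine mem_iUnion.2 ⟨k, t, fun htM => ?_, hxt⟩
  obtain ⟨b, hb, hbt⟩ := mem_multSetN_ASet.1 htM
  -- `Δ m` agrees with `x` on `S k` but vanishes at `b`, so `x` has points outside `W` nearby.
  obtain ⟨m, hmt, hbm⟩ := Int.exists_dvd_sub_and_dvd_sub (p := (lcmS (S k) : ℤ))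
    (q := ((b : ℕ) : ℤ)) (a := t) (b := 0)
    (by rw [Int.gcd_natCast_natCast, Nat.gcd_comm, sub_zero]; exact hbt)
  have hmx : AgreeOn (coords B (S k)) (delta B m) x :=
    ((agreeOn_delta_iff (hsub k)).2 (dvd_sub_comm.1 hmt)).trans hxt.symm
  have hmW : deltaH B m ∈ window B := hUW (hIU fun i hi => hmx i (hk i hi))
  exact hmW ⟨b, hb⟩ ((ZMod.intCast_zmod_eq_zero_iff_dvd _ _).2 (by simpa using hbm))

lemma add_lift_notMem_multSetN {S : Finset ℕ+} (hS : ↑S ⊆ B) {h : Hspace B}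
    (hh : ∀ x ∈ interior (window B), h + x ∈ window B) {t : ℤ}
    (ht : AgreeOn (coords B S) (h : Gspace B) (delta B t)) {n : ℤ}
    (hn : n ∉ MultSetN (ASet B S)) : n + t ∉ MultSetN (ASet B S) := by
  intro hnt
  obtain ⟨b, hb, hbnt⟩ := mem_multSetN_ASet.1 hnt
  obtain ⟨t', ht'⟩ := exists_agreeOn_delta h (finite_coords (insert b S))
  have htt' : ((lcmS S : ℕ) : ℤ) ∣ t' - t :=
    (agreeOn_delta_iff hS).1 (ht.symm.trans (ht'.mono (coords_mono (Finset.subset_insert _ _))))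
  -- `Δ m` lies in `int(W)`, while `h + Δ m` vanishes at `b`.
  obtain ⟨m, hmn, hmb⟩ := Int.exists_dvd_sub_and_dvd_sub (p := (lcmS S : ℤ))
    (q := ((b : ℕ) : ℤ)) (a := n) (b := -t') (by
      rw [Int.gcd_natCast_natCast, Nat.gcd_comm, sub_neg_eq_add,
        show n + t' = n + t + (t' - t) by ring]
      exact dvd_add hbnt ((Int.natCast_dvd_natCast.2 (Nat.gcd_dvd_right _ _)).trans htt'))
  have hm : deltaH B m ∈ freeCylinders B S := by
    refine ⟨m, fun hmM => hn ?_, fun _ _ => rfl⟩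
    exact (Int.mem_iff_of_sub_mem_stabilizer
      (zmultiples_lcmS_le_stabilizer S (Int.mem_zmultiples_iff.2 hmn))).1 hmM
  refine hh _ (freeCylinders_subset_interior_window hS hm) ⟨b, hb⟩ ?_
  change (h : Gspace B) ⟨b, hb⟩ + (m : ZMod (b : ℕ)) = 0
  rw [ht' ⟨b, hb⟩ (Finset.mem_insert_self _ _), delta_apply, ← Int.cast_add,
    ZMod.intCast_zmod_eq_zero_iff_dvd]
  simpa [add_comm] using hmb

lemma lift_mem_stabilizer {S : Finset ℕ+} (hS : ↑S ⊆ B) {h : Hspace B}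
    (hh : h ∈ AddAction.stabilizer (Hspace B) (interior (window B))) {t : ℤ}
    (ht : AgreeOn (coords B S) (h : Gspace B) (delta B t)) :
    t ∈ AddAction.stabilizer ℤ (MultSetN (ASet B S)) := by
  have hW : ∀ g ∈ AddAction.stabilizer (Hspace B) (interior (window B)),
      ∀ x ∈ interior (window B), g + x ∈ window B :=
    fun g hg x hx => interior_subset ((AddAction.mem_stabilizer_set.1 hg x).2 hx)
  refine Int.mem_stabilizer_set_iff.2 fun n => ⟨fun hnt => ?_, fun hn => ?_⟩
  · by_contra hn
    exact add_lift_notMem_multSetN hS (hW h hh) ht hn hnt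
  · by_contra hnt
    exact add_lift_notMem_multSetN hS (hW (-h) (neg_mem hh)) ht.neg_delta hnt (by simpa using hn)

theorem mem_stabilizer_interior_window_iff {S : ℕ → Finset ℕ+} (hS : Monotone S)
    (hsub : ∀ k, ↑(S k) ⊆ B) (hcover : ∀ b ∈ B, ∃ k, b ∈ S k) {h : Hspace B} :
    h ∈ AddAction.stabilizer (Hspace B) (interior (window B)) ↔
      ∀ k t, AgreeOn (coords B (S k)) (h : Gspace B) (delta B t) →
        t ∈ AddAction.stabilizer ℤ (MultSetN (ASet B (S k))) := by
  refine ⟨fun hh k t ht => lift_mem_stabilizer (hsub k) hh ht, fun hh => ?_⟩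
  rw [interior_window_eq_iUnion hS hsub hcover]
  refine AddAction.mem_stabilizer_set.2 fun x => ?_
  simp only [vadd_eq_add, mem_iUnion]
  refine exists_congr fun k => ?_
  obtain ⟨t, ht⟩ := exists_agreeOn_delta h (finite_coords (S k))
  exact AddAction.mem_stabilizer_set.1 (mem_stabilizer_freeCylinders ht (hh k t ht)) x

lemma forall_dvd_of_stabilizer_eq_bot {S : ℕ → Finset ℕ+} (hS : Monotone S)
    (hsub : ∀ k, ↑(S k) ⊆ B) (hcover : ∀ b ∈ B, ∃ k, b ∈ S k) {c : ℕ → ℕ}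
    (hc : ∀ k, AddAction.stabilizer ℤ (MultSetN (ASet B (S k))) = AddSubgroup.zmultiples (c k : ℤ))
    (hbot : AddAction.stabilizer (Hspace B) (interior (window B)) = ⊥) :
    ∀ b ∈ B, ∃ n, (b : ℕ) ∣ c n := by
  intro b hb
  -- A cluster point of `Δ(c m)` is a period of `int(W)`, hence `0`.
  obtain ⟨h, hh⟩ := exists_clusterPt_of_compactSpace (map (fun m => deltaH B (c m)) atTop)
  have hfreq : ∀ k, ∃ m ≥ k, AgreeOn (coords B (S k)) (h : Gspace B) (delta B (c m)) := by
    intro k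
    have hU : {y : Hspace B | AgreeOn (coords B (S k)) (y : Gspace B) h} ∈ 𝓝 h :=
      ((isOpen_setOf_agreeOn (finite_coords (S k)) (h : Gspace B)).preimage
        continuous_subtype_val).mem_nhds fun _ _ => rfl
    obtain ⟨m, hkm, hm⟩ := frequently_atTop.1 (mapClusterPt_iff_frequently.1 hh _ hU) k
    exact ⟨m, hkm, AgreeOn.symm hm⟩
  have h0 : h = 0 := by
    rw [← AddSubgroup.mem_bot, ← hbot, mem_stabilizer_interior_window_iff hS hsub hcover]
    intro k t ht
    obtain ⟨m, hkm, hm⟩ := hfreq k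
    have hcm : (c m : ℤ) ∈ AddAction.stabilizer ℤ (MultSetN (ASet B (S k))) :=
      stabilizer_multSetN_ASet_anti (Finset.lcm_mono (hS hkm))
        (hc m ▸ AddSubgroup.mem_zmultiples _)
    have htm : t - c m ∈ AddAction.stabilizer ℤ (MultSetN (ASet B (S k))) :=
      zmultiples_lcmS_le_stabilizer _
        (Int.mem_zmultiples_iff.2 ((agreeOn_delta_iff (hsub k)).1 (hm.symm.trans ht)))
    simpa using add_mem hcm htm
  obtain ⟨k, hk⟩ := hcover b hb
  obtain ⟨m, -, hm⟩ := hfreq k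
  refine ⟨m, Int.natCast_dvd_natCast.1 ((ZMod.intCast_zmod_eq_zero_iff_dvd _ _).1 ?_)⟩
  rw [← delta_apply (B := B) _ ⟨b, hb⟩, ← hm _ hk, h0]
  rfl

lemma stabilizer_eq_bot_of_forall_dvd {S : ℕ → Finset ℕ+} (hS : Monotone S)
    (hsub : ∀ k, ↑(S k) ⊆ B) (hcover : ∀ b ∈ B, ∃ k, b ∈ S k) {c : ℕ → ℕ}
    (hc : ∀ k, AddAction.stabilizer ℤ (MultSetN (ASet B (S k))) = AddSubgroup.zmultiples (c k : ℤ))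
    (hdvd : ∀ b ∈ B, ∃ n, (b : ℕ) ∣ c n) :
    AddAction.stabilizer (Hspace B) (interior (window B)) = ⊥ := by
  refine (AddSubgroup.eq_bot_iff_forall _).2 fun h hh => Subtype.ext (funext fun b => ?_)
  obtain ⟨n, hn⟩ := hdvd b b.2
  obtain ⟨k, hnk, hk⟩ :=
    ((eventually_ge_atTop n).and (eventually_mem_of_monotone hS hcover b.2)).exists
  obtain ⟨t, ht⟩ := exists_agreeOn_delta h (finite_coords (S k))
  have hct : (c n : ℤ) ∣ t := by
    rw [← Int.mem_zmultiples_iff, ← hc n]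
    exact stabilizer_multSetN_ASet_anti (Finset.lcm_mono (hS hnk))
      ((mem_stabilizer_interior_window_iff hS hsub hcover).1 hh k t ht)
  rw [ht b hk, delta_apply]
  exact (ZMod.intCast_zmod_eq_zero_iff_dvd _ _).2 ((Int.natCast_dvd_natCast.2 hn).trans hct)

theorem statement19_general (B : Set ℕ+)
    (S : ℕ → Finset ℕ+) (hmono : ∀ k, S k ⊆ S (k + 1))
    (hsub : ∀ k, ↑(S k) ⊆ B) (hcover : ∀ b ∈ B, ∃ k, b ∈ S k)
    (c : ℕ → ℕ)
    (hpos : ∀ k, 0 < c k)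
    (hper : ∀ k, ∀ n : ℤ,
      n + (c k : ℤ) ∈ MultSetN (ASet B (S k)) ↔ n ∈ MultSetN (ASet B (S k)))
    (hleast : ∀ k, ∀ c' : ℕ, 0 < c' →
      (∀ n : ℤ, n + (c' : ℤ) ∈ MultSetN (ASet B (S k)) ↔ n ∈ MultSetN (ASet B (S k))) →
      c k ≤ c') :
    {h : Hspace B | (fun w => w + h) '' interior (window B) = interior (window B)} = {0} ↔
      ∀ b ∈ B, ∃ n : ℕ, (b : ℕ) ∣ c n := by
  have hS : Monotone S := monotone_nat_of_le_succ hmono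
  have hc : ∀ k, AddAction.stabilizer ℤ (MultSetN (ASet B (S k))) =
      AddSubgroup.zmultiples (c k : ℤ) := by
    intro k
    rw [AddSubgroup.zmultiples_eq_closure]
    refine AddSubgroup.cyclic_of_min ⟨⟨Int.mem_stabilizer_set_iff.2 (hper k), by
      exact_mod_cast hpos k⟩, fun g ⟨hg, hg0⟩ => ?_⟩
    lift g to ℕ using hg0.le
    exact_mod_cast hleast k g (by exact_mod_cast hg0) (Int.mem_stabilizer_set_iff.1 hg)
  rw [setOf_image_add_right_eq_stabilizer, ← AddSubgroup.coe_bot, SetLike.coe_set_eq]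
  exact ⟨forall_dvd_of_stabilizer_eq_bot hS hsub hcover hc,
    stabilizer_eq_bot_of_forall_dvd hS hsub hcover hc⟩

/-- Let `S 0 ⊆ S 1 ⊆ …` be a filtration of `B` by finite sets and, for each
`k`, let `c k` be the least positive integer whose translation leaves `M_{A_{S k}}`
invariant. Then the period group `H_{int(W)}` is trivial iff every `b ∈ B` divides some
`c n`. -/
theorem statement19 (B : Set ℕ+) (hB : B.Infinite)
    (S : ℕ → Finset ℕ+) (hmono : ∀ k, S k ⊆ S (k + 1))
    (hsub : ∀ k, ↑(S k) ⊆ B) (hcover : ∀ b ∈ B, ∃ k, b ∈ S k)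
    (c : ℕ → ℕ)
    (hpos : ∀ k, 0 < c k)
    (hper : ∀ k, ∀ n : ℤ,
      n + (c k : ℤ) ∈ MultSetN (ASet B (S k)) ↔ n ∈ MultSetN (ASet B (S k)))
    (hleast : ∀ k, ∀ c' : ℕ, 0 < c' →
      (∀ n : ℤ, n + (c' : ℤ) ∈ MultSetN (ASet B (S k)) ↔ n ∈ MultSetN (ASet B (S k))) →
      c k ≤ c') :
    {h : Hspace B | (fun w => w + h) '' interior (window B) = interior (window B)} = {0} ↔
      ∀ b ∈ B, ∃ n : ℕ, (b : ℕ) ∣ c n :=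
  statement19_general B S hmono hsub hcover c hpos hper hleast

end BFree
end
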